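/- arXiv:2503.11323 — 9 statements merged into one kernel-verified Lean document; each statement's English description precedes it below -/
import Mathlib

section
/- For all ρ, α, φ', θ' ∈ ℝ, the determinant of the 3×3 matrix with rows (cos α·sinh ρ, sin α·cosh ρ, sin α), (−sin α·sinh ρ, cos α·cosh ρ, −cos α), (sin φ'·cos θ', −cos φ', −1) equals −(cosh ρ·sinh ρ + cos 2α·sinh ρ·cos φ' + sin 2α·cosh ρ·sin φ'·cos θ'). -/
/-- Determinant of the coefficient matrix of the linear system in (A, B, C)
for perpendicular trajectories, in prolate spheroidal coordinates. -/
theorem stmt_7 (ρ α φ' θ' : ℝ) :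
    Matrix.det !![Real.cos α * Real.sinh ρ, Real.sin α * Real.cosh ρ, Real.sin α;
                  -(Real.sin α) * Real.sinh ρ, Real.cos α * Real.cosh ρ, -(Real.cos α);
                  Real.sin φ' * Real.cos θ', -(Real.cos φ'), -1]
      = -(Real.cosh ρ * Real.sinh ρ + Real.cos (2*α) * Real.sinh ρ * Real.cos φ'
          + Real.sin (2*α) * Real.cosh ρ * Real.sin φ' * Real.cos θ') := by
  simp [Matrix.det_fin_three, Real.cos_two_mul, Real.sin_two_mul]
  linear_combination (Real.sinh ρ * Real.cos φ' - Real.sinh ρ * Real.cosh ρ) * Real.sin_sq_add_cos_sq α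
end

section
/- Let ρ > ln 6 and α, φ', θ' ∈ ℝ. Then cosh ρ·sinh ρ + cos 2α·sinh ρ·cos φ' + sin 2α·cosh ρ·sin φ'·cos θ' > 0. -/
/-- For ρ > ln 6, the determinant quantity
cosh ρ·sinh ρ + cos 2α·sinh ρ·cos φ' + sin 2α·cosh ρ·sin φ'·cos θ' is positive. -/
theorem stmt_10 (ρ α φ' θ' : ℝ) (hρ : Real.log 6 < ρ) :
    0 < Real.cosh ρ * Real.sinh ρ + Real.cos (2*α) * Real.sinh ρ * Real.cos φ'
        + Real.sin (2*α) * Real.cosh ρ * Real.sin φ' * Real.cos θ' := by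
  have hx : (6 : ℝ) < Real.exp ρ := by
    calc (6:ℝ) = Real.exp (Real.log 6) := (Real.exp_log (by norm_num)).symm
    _ < Real.exp ρ := Real.exp_lt_exp.mpr hρ
  have hs : 1 < Real.sinh ρ := by
    have := Real.sinh_eq ρ
    have hxi : Real.exp (-ρ) < 1/6 := by
      rw [Real.exp_neg]
      rw [inv_lt_comm₀ (Real.exp_pos ρ) (by norm_num)] <;> linarith
    nlinarith [Real.exp_pos (-ρ)]
  have hc : Real.sinh ρ < Real.cosh ρ := Real.sinh_lt_cosh ρ
  have hsc : Real.sinh ρ + Real.cosh ρ = Real.exp ρ := by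
    rw [Real.sinh_eq, Real.cosh_eq]; ring
  have hprod : Real.cosh ρ * Real.sinh ρ > Real.sinh ρ + Real.cosh ρ := by
    have h2 : Real.cosh ρ ^ 2 - Real.sinh ρ ^ 2 = 1 := Real.cosh_sq_sub_sinh_sq ρ
    nlinarith [hs, hc, hx, hsc, sq_nonneg (Real.cosh ρ - Real.sinh ρ)]
  have h1 : |Real.cos (2*α) * Real.cos φ'| ≤ 1 := by
    rw [abs_mul]
    exact mul_le_one₀ (Real.abs_cos_le_one _) (abs_nonneg _) (Real.abs_cos_le_one _)
  have h2 : |Real.sin (2*α) * Real.sin φ' * Real.cos θ'| ≤ 1 := by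
    rw [abs_mul, abs_mul]
    exact mul_le_one₀ (mul_le_one₀ (Real.abs_sin_le_one _) (abs_nonneg _) (Real.abs_sin_le_one _))
      (abs_nonneg _) (Real.abs_cos_le_one _)
  have e1 := abs_le.mp h1
  have e2 := abs_le.mp h2
  have hsp : 0 < Real.sinh ρ := by linarith
  have hcp : 0 < Real.cosh ρ := Real.cosh_pos ρ
  nlinarith [mul_le_mul_of_nonneg_left e1.1 hsp.le, mul_le_mul_of_nonneg_left e2.1 hcp.le]
end

section
/- Let ρ, ρ' > ln 6, φ, φ' ∈ (0, π), and α, θ, θ' ∈ ℝ. Suppose the following three equations hold: (i) cosh ρ = cosh ρ'; (ii) (cos α·(cosh ρ cos φ − 1) + sin α·sinh ρ sin φ cos θ)/(cosh ρ − cos φ) = (cos α·(cosh ρ' cos φ' − 1) + sin α·sinh ρ' sin φ' cos θ')/(cosh ρ' − cos φ'); (iii) (−sin α·(cosh ρ cos φ + 1) + cos α·sinh ρ sin φ cos θ)/(cosh ρ + cos φ) = (−sin α·(cosh ρ' cos φ' + 1) + cos α·sinh ρ' sin φ' cos θ')/(cosh ρ' + cos φ'). Then ρ = ρ', φ = φ',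 and cos θ = cos θ'. -/
set_option maxHeartbeats 1200000 in
/-- For perpendicular trajectories, the composed canonical relation
equations in prolate spheroidal coordinates with ρ, ρ' > ln 6 and φ, φ' ∈ (0, π)
force ρ = ρ', φ = φ' and cos θ = cos θ'. -/
theorem stmt_11 (ρ ρ' φ φ' α θ θ' : ℝ)
    (hρ : Real.log 6 < ρ) (hρ' : Real.log 6 < ρ')
    (hφ : φ ∈ Set.Ioo 0 Real.pi) (hφ' : φ' ∈ Set.Ioo 0 Real.pi)
    (h1 : Real.cosh ρ = Real.cosh ρ')
    (h2 : (Real.cos α * (Real.cosh ρ * Real.cos φ - 1)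
            + Real.sin α * Real.sinh ρ * Real.sin φ * Real.cos θ)
            / (Real.cosh ρ - Real.cos φ)
        = (Real.cos α * (Real.cosh ρ' * Real.cos φ' - 1)
            + Real.sin α * Real.sinh ρ' * Real.sin φ' * Real.cos θ')
            / (Real.cosh ρ' - Real.cos φ'))
    (h3 : (-(Real.sin α) * (Real.cosh ρ * Real.cos φ + 1)
            + Real.cos α * Real.sinh ρ * Real.sin φ * Real.cos θ)
            / (Real.cosh ρ + Real.cos φ)
        = (-(Real.sin α) * (Real.cosh ρ' * Real.cos φ' + 1)
            + Real.cos α * Real.sinh ρ' * Real.sin φ' * Real.cos θ')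
            / (Real.cosh ρ' + Real.cos φ')) :
    ρ = ρ' ∧ φ = φ' ∧ Real.cos θ = Real.cos θ' := by
  have hlog6 : (0:ℝ) < Real.log 6 := Real.log_pos (by norm_num)
  have hρ0 : (0:ℝ) < ρ := hlog6.trans hρ
  have hρ'0 : (0:ℝ) < ρ' := hlog6.trans hρ'
  have hρρ' : ρ = ρ' :=
    Real.cosh_strictMonoOn.injOn (Set.mem_Ici.2 hρ0.le) (Set.mem_Ici.2 hρ'0.le) h1
  subst hρρ'
  have hc3 : (3:ℝ) < Real.cosh ρ := by
    have h6 : (6:ℝ) < Real.exp ρ := by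
      have := Real.exp_lt_exp.2 hρ
      rwa [Real.exp_log (by norm_num)] at this
    have hpos : (0:ℝ) < Real.exp (-ρ) := Real.exp_pos _
    rw [Real.cosh_eq]; linarith
  set c := Real.cosh ρ with hcdef
  set s := Real.sinh ρ with hsdef
  have hs2 : s ^ 2 = c ^ 2 - 1 := by rw [hsdef, hcdef, Real.sinh_sq]
  set u := Real.cos φ with hudef
  set u' := Real.cos φ' with hu'def
  set v := Real.sin φ * Real.cos θ with hvdef
  set v' := Real.sin φ' * Real.cos θ' with hv'def
  have hu1 : u ^ 2 ≤ 1 := by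
    have := Real.neg_one_le_cos φ; have := Real.cos_le_one φ; nlinarith
  have hu'1 : u' ^ 2 ≤ 1 := by
    have := Real.neg_one_le_cos φ'; have := Real.cos_le_one φ'; nlinarith
  have hv1 : v ^ 2 ≤ 1 := by
    rw [hvdef, mul_pow]
    nlinarith [Real.sin_sq_le_one φ, Real.cos_sq_le_one θ, sq_nonneg (Real.sin φ), sq_nonneg (Real.cos θ)]
  have hv'1 : v' ^ 2 ≤ 1 := by
    rw [hv'def, mul_pow]
    nlinarith [Real.sin_sq_le_one φ', Real.cos_sq_le_one θ', sq_nonneg (Real.sin φ'), sq_nonneg (Real.cos θ')]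
  have habs : |u| ≤ 1 := abs_le.2 ⟨Real.neg_one_le_cos φ, Real.cos_le_one φ⟩
  have habs' : |u'| ≤ 1 := abs_le.2 ⟨Real.neg_one_le_cos φ', Real.cos_le_one φ'⟩
  have hd1 : c - u ≠ 0 := by have := abs_le.1 habs; intro h; linarith [this.2]
  have hd2 : c - u' ≠ 0 := by have := abs_le.1 habs'; intro h; linarith [this.2]
  have hd3 : c + u ≠ 0 := by have := abs_le.1 habs; intro h; linarith [this.1]
  have hd4 : c + u' ≠ 0 := by have := abs_le.1 habs'; intro h; linarith [this.1]
  rw [div_eq_div_iff (by have h := abs_le.1 habs; linarith [h.2]) (by have h := abs_le.1 habs'; linarith [h.2])] at h2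
  rw [div_eq_div_iff (by have h := abs_le.1 habs; linarith [h.1]) (by have h := abs_le.1 habs'; linarith [h.1])] at h3
  -- cross-multiplied equations
  have e1 : Real.cos α * ((c*u-1)*(c-u') - (c*u'-1)*(c-u))
      + Real.sin α * (s * (v*(c-u') - v'*(c-u))) = 0 := by linear_combination h2
  have e2 : -(Real.sin α) * ((c*u+1)*(c+u') - (c*u'+1)*(c+u))
      + Real.cos α * (s * (v*(c+u') - v'*(c+u))) = 0 := by linear_combination h3
  -- key quadratic identity
  have hK : ((c*u-1)*(c-u') - (c*u'-1)*(c-u)) * ((c*u+1)*(c+u') - (c*u'+1)*(c+u))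
      + (s * (v*(c-u') - v'*(c-u))) * (s * (v*(c+u') - v'*(c+u))) = 0 := by
    have hpy := Real.sin_sq_add_cos_sq α
    linear_combination
      (Real.cos α * ((c*u+1)*(c+u') - (c*u'+1)*(c+u))
        + Real.sin α * (s * (v*(c+u') - v'*(c+u)))) * e1
      + (Real.cos α * (s * (v*(c-u') - v'*(c-u)))
        - Real.sin α * (((c*u-1)*(c-u') - (c*u'-1)*(c-u)))) * e2
      - (((c*u-1)*(c-u') - (c*u'-1)*(c-u)) * ((c*u+1)*(c+u') - (c*u'+1)*(c+u))
        + (s * (v*(c-u') - v'*(c-u))) * (s * (v*(c+u') - v'*(c+u)))) * hpy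
  have key : (c^2-1) * ((c^2-1)*(u-u')^2 + c^2*(v-v')^2 - (v*u'-v'*u)^2) = 0 := by
    linear_combination hK - ((v*(c-u') - v'*(c-u)) * (v*(c+u') - v'*(c+u))) * hs2
  have hc1 : (0:ℝ) < c^2 - 1 := by nlinarith
  have key2 : (c^2-1)*(u-u')^2 + c^2*(v-v')^2 - (v*u'-v'*u)^2 = 0 :=
    (mul_eq_zero.1 key).resolve_left (ne_of_gt hc1)
  have hz : (u - u')^2 + (v - v')^2 ≤ 0 := by
    nlinarith [sq_nonneg (v*(u'-u) - u*(v-v')), sq_nonneg (u-u'), sq_nonneg (v-v'),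
      mul_nonneg (by linarith : (0:ℝ) ≤ 1 - v^2) (sq_nonneg (u-u')),
      mul_nonneg (by linarith : (0:ℝ) ≤ 1 - u^2) (sq_nonneg (v-v')), sq_nonneg (c-3)]
  have huu : u = u' := by
    have h0 : (u - u')^2 = 0 := le_antisymm (by nlinarith [sq_nonneg (v-v')]) (sq_nonneg _)
    have := pow_eq_zero_iff (n := 2) (by norm_num) |>.1 h0
    linarith [sub_eq_zero.1 this]
  have hvv : v = v' := by
    have h0 : (v - v')^2 = 0 := le_antisymm (by nlinarith [sq_nonneg (u-u')]) (sq_nonneg _)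
    have := pow_eq_zero_iff (n := 2) (by norm_num) |>.1 h0
    linarith [sub_eq_zero.1 this]
  have hφφ : φ = φ' :=
    Real.injOn_cos ⟨hφ.1.le, hφ.2.le⟩ ⟨hφ'.1.le, hφ'.2.le⟩ huu
  refine ⟨rfl, hφφ, ?_⟩
  subst hφφ
  have hsin : Real.sin φ ≠ 0 := (Real.sin_pos_of_pos_of_lt_pi hφ.1 hφ.2).ne'
  exact mul_left_cancel₀ hsin hvv
end

section
/- Let s, r ∈ ℝ with (s, r) ≠ (0, 0), set D = √(r² + s²), γ₁ = (0, 2s, 0), γ₂ = (2r, 0, 0). Let x = (x₁, x₂, x₃) and y = (y₁, y₂, y₃) in ℝ³ satisfy x₃ ≠ 0, y₃ ≠ 0, |x − γ₁| + |x − γ₂| > (37/6)·D, and |y − γ₁| + |y − γ₂| > (37/6)·D. Suppose the three composition equations hold: (i) |x − γ₁| + |x − γ₂| = |y − γ₁| + |y − γ₂|; (ii) (x₁ − 2r)/|x − γ₂| = (y₁ − 2r)/|y − γ₂|; (iii) (x₂ − 2s)/|x − γ₁| = (y₂ − 2s)/|y − γ₁|. Then x₁ = y₁, x₂ = y₂,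 and x₃ = y₃ or x₃ = −y₃. -/
private lemma aux_bound (R P Dv : ℝ) (hD : 0 < Dv) (hr2 : R^2 ≤ Dv^2) (hp2 : P^2 ≤ 1) :
    -(2*Dv) ≤ 2*R*P := by
  nlinarith [sq_nonneg (R + Dv*P), mul_nonneg (sub_nonneg.mpr hp2) (sq_nonneg Dv)]



/-- Time-gated absence of artefacts for perpendicular trajectories:
if x and y (with nonzero third coordinate) satisfy the three composition equations and
both bistatic ranges exceed (37/6)·D, then y = x or y is the mirror image of x across
the plane of the trajectories. -/
theorem stmt_12 (s r x₁ x₂ x₃ y₁ y₂ y₃ : ℝ) (hsr : (s, r) ≠ ((0:ℝ), (0:ℝ)))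
    (hx₃ : x₃ ≠ 0) (hy₃ : y₃ ≠ 0)
    (hxgate : Real.sqrt (x₁^2 + (x₂ - 2*s)^2 + x₃^2)
        + Real.sqrt ((x₁ - 2*r)^2 + x₂^2 + x₃^2)
        > (37/6) * Real.sqrt (r^2 + s^2))
    (hygate : Real.sqrt (y₁^2 + (y₂ - 2*s)^2 + y₃^2)
        + Real.sqrt ((y₁ - 2*r)^2 + y₂^2 + y₃^2)
        > (37/6) * Real.sqrt (r^2 + s^2))
    (h1 : Real.sqrt (x₁^2 + (x₂ - 2*s)^2 + x₃^2)
        + Real.sqrt ((x₁ - 2*r)^2 + x₂^2 + x₃^2)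
        = Real.sqrt (y₁^2 + (y₂ - 2*s)^2 + y₃^2)
        + Real.sqrt ((y₁ - 2*r)^2 + y₂^2 + y₃^2))
    (h2 : (x₁ - 2*r) / Real.sqrt ((x₁ - 2*r)^2 + x₂^2 + x₃^2)
        = (y₁ - 2*r) / Real.sqrt ((y₁ - 2*r)^2 + y₂^2 + y₃^2))
    (h3 : (x₂ - 2*s) / Real.sqrt (x₁^2 + (x₂ - 2*s)^2 + x₃^2)
        = (y₂ - 2*s) / Real.sqrt (y₁^2 + (y₂ - 2*s)^2 + y₃^2)) :
    x₁ = y₁ ∧ x₂ = y₂ ∧ (x₃ = y₃ ∨ x₃ = -y₃) := by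
  have hrs : 0 < r^2 + s^2 := by
    by_contra h
    push_neg at h
    have hs0 : s = 0 := by nlinarith [sq_nonneg r, sq_nonneg s]
    have hr0 : r = 0 := by nlinarith [sq_nonneg r, sq_nonneg s]
    exact hsr (by simp [hs0, hr0])
  have hx3 : 0 < x₃^2 := by positivity
  have hy3 : 0 < y₃^2 := by positivity
  set D := Real.sqrt (r^2 + s^2) with hD_def
  set a := Real.sqrt (x₁^2 + (x₂ - 2*s)^2 + x₃^2) with ha_def
  set b := Real.sqrt ((x₁ - 2*r)^2 + x₂^2 + x₃^2) with hb_def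
  set c := Real.sqrt (y₁^2 + (y₂ - 2*s)^2 + y₃^2) with hc_def
  set d := Real.sqrt ((y₁ - 2*r)^2 + y₂^2 + y₃^2) with hd_def
  have hD : 0 < D := Real.sqrt_pos.mpr hrs
  have hD2 : D^2 = r^2 + s^2 := Real.sq_sqrt hrs.le
  have ha : 0 < a := Real.sqrt_pos.mpr (by positivity)
  have hb : 0 < b := Real.sqrt_pos.mpr (by positivity)
  have hc : 0 < c := Real.sqrt_pos.mpr (by positivity)
  have hd : 0 < d := Real.sqrt_pos.mpr (by positivity)
  have ha2 : a^2 = x₁^2 + (x₂ - 2*s)^2 + x₃^2 := Real.sq_sqrt (by positivity)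
  have hb2 : b^2 = (x₁ - 2*r)^2 + x₂^2 + x₃^2 := Real.sq_sqrt (by positivity)
  have hc2 : c^2 = y₁^2 + (y₂ - 2*s)^2 + y₃^2 := Real.sq_sqrt (by positivity)
  have hd2 : d^2 = (y₁ - 2*r)^2 + y₂^2 + y₃^2 := Real.sq_sqrt (by positivity)
  set p := (x₁ - 2*r) / b with hp_def
  set q := (x₂ - 2*s) / a with hq_def
  clear_value D a b c d p q
  have hpb : p * b = x₁ - 2*r := by rw [hp_def]; exact div_mul_cancel₀ _ hb.ne'
  have hqa : q * a = x₂ - 2*s := by rw [hq_def]; exact div_mul_cancel₀ _ ha.ne'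
  have hpd : p * d = y₁ - 2*r := by rw [h2]; exact div_mul_cancel₀ _ hd.ne'
  have hqc : q * c = y₂ - 2*s := by rw [h3]; exact div_mul_cancel₀ _ hc.ne'
  have hp2 : p^2 ≤ 1 := by
    have h' : (x₁ - 2*r)^2 ≤ b^2 := by rw [hb2]; linarith [sq_nonneg x₂, hx3.le]
    rw [hp_def, div_pow]
    exact div_le_one_of_le₀ h' (sq_nonneg b)
  have hq2 : q^2 ≤ 1 := by
    have h' : (x₂ - 2*s)^2 ≤ a^2 := by rw [ha2]; linarith [sq_nonneg x₁, hx3.le]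
    rw [hq_def, div_pow]
    exact div_le_one_of_le₀ h' (sq_nonneg a)
  have hr2 : r^2 ≤ D^2 := by rw [hD2]; linarith [sq_nonneg s]
  have hs2 : s^2 ≤ D^2 := by rw [hD2]; linarith [sq_nonneg r]
  have hK : 0 < a + b + 2*r*p + 2*s*q := by
    have h₁ := aux_bound r p D hD hr2 hp2
    have h₂ := aux_bound s q D hD hs2 hq2
    linarith only [hxgate, hD, h₁, h₂]
  have hEa : 2*a*(a + b + 2*r*p + 2*s*q)
      = (a+b)^2 + 4*(r^2 - s^2) + 4*r*p*(a+b) := by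
    linear_combination ha2 - hb2 - 4*r*hpb + 4*s*hqa
  have hEc : 2*c*(a + b + 2*r*p + 2*s*q)
      = (a+b)^2 + 4*(r^2 - s^2) + 4*r*p*(a+b) := by
    linear_combination hc2 - hd2 - 4*r*hpd + 4*s*hqc + (2*c - (a+b) - (c+d) - 4*r*p)*h1
  have hac : a = c := by
    have h := hEa.trans hEc.symm
    have h' := mul_right_cancel₀ hK.ne' h
    linarith only [h']
  have hbd : b = d := by linarith only [h1, hac]
  have hx1 : x₁ = y₁ := by rw [hbd] at hpb; linarith only [hpb, hpd]
  have hx2 : x₂ = y₂ := by rw [hac] at hqa; linarith only [hqa, hqc]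
  refine ⟨hx1, hx2, ?_⟩
  have h3sq : x₃^2 = y₃^2 := by
    have : b^2 = d^2 := by rw [hbd]
    rw [hb2, hd2, hx1, hx2] at this
    linarith only [this]
  rcases mul_eq_zero.mp (by linear_combination h3sq : (x₃ - y₃)*(x₃ + y₃) = 0) with h | h
  · left; linarith only [h]
  · right; linarith only [h]
end

section
/- Let δ ∈ ℝ, ρ > 0, and α, φ, φ', θ, θ' ∈ ℝ. Set A = cos φ − cos φ', B = sin φ cos θ − sin φ' cos θ', C = sin φ' cos θ' cos φ − sin φ cos φ' cos θ. Then the equation (δ·(cos α·cosh ρ cos φ + sin α·sinh ρ sin φ cos θ + cos α) + (−sin α·cosh ρ cos φ + cos α·sinh ρ sin φ cos θ − sin α))/(cosh ρ + cos φ) = (δ·(cos α·cosh ρ cos φ' + sin α·sinh ρ sin φ' cos θ' + cos α) + (−sin α·cosh ρ cos φ' + cos α·sinh ρ sin φ' cos θ' − sin α))/(cosh ρ + cos φ') holds if and only if A·sinh ρ·(δ cos α − sin α) + B·cosh ρ·(cos α + δ sin α) − C·(cos α + δ sin α) = 0. -/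
/-- The prolate-spheroidal form of the s-derivative equation of the
composed canonical relations for non-perpendicular trajectories is equivalent to
A·sinh ρ·(δ cos α − sin α) + B·cosh ρ·(cos α + δ sin α) − C·(cos α + δ sin α) = 0. -/
theorem stmt_14 (δ ρ α φ φ' θ θ' : ℝ) (hρ : 0 < ρ) :
    let A := Real.cos φ - Real.cos φ'
    let B := Real.sin φ * Real.cos θ - Real.sin φ' * Real.cos θ'
    let C := Real.sin φ' * Real.cos θ' * Real.cos φ - Real.sin φ * Real.cos φ' * Real.cos θ
    ((δ * (Real.cos α * Real.cosh ρ * Real.cos φ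
            + Real.sin α * Real.sinh ρ * Real.sin φ * Real.cos θ + Real.cos α)
        + (-(Real.sin α) * Real.cosh ρ * Real.cos φ
            + Real.cos α * Real.sinh ρ * Real.sin φ * Real.cos θ - Real.sin α))
        / (Real.cosh ρ + Real.cos φ)
      = (δ * (Real.cos α * Real.cosh ρ * Real.cos φ'
            + Real.sin α * Real.sinh ρ * Real.sin φ' * Real.cos θ' + Real.cos α)
        + (-(Real.sin α) * Real.cosh ρ * Real.cos φ'
            + Real.cos α * Real.sinh ρ * Real.sin φ' * Real.cos θ' - Real.sin α))
        / (Real.cosh ρ + Real.cos φ'))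
    ↔ A * Real.sinh ρ * (δ * Real.cos α - Real.sin α)
        + B * Real.cosh ρ * (Real.cos α + δ * Real.sin α)
        - C * (Real.cos α + δ * Real.sin α) = 0 := by
  intro A B C
  have h1 : 1 < Real.cosh ρ := Real.one_lt_cosh.mpr hρ.ne'
  have hs : 0 < Real.sinh ρ := Real.sinh_pos_iff.mpr hρ
  have hd1 : (0:ℝ) < Real.cosh ρ + Real.cos φ := by nlinarith [Real.neg_one_le_cos φ]
  have hd2 : (0:ℝ) < Real.cosh ρ + Real.cos φ' := by nlinarith [Real.neg_one_le_cos φ']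
  rw [div_eq_div_iff hd1.ne' hd2.ne']
  have key : (δ * (Real.cos α * Real.cosh ρ * Real.cos φ
            + Real.sin α * Real.sinh ρ * Real.sin φ * Real.cos θ + Real.cos α)
        + (-(Real.sin α) * Real.cosh ρ * Real.cos φ
            + Real.cos α * Real.sinh ρ * Real.sin φ * Real.cos θ - Real.sin α))
        * (Real.cosh ρ + Real.cos φ')
      - (δ * (Real.cos α * Real.cosh ρ * Real.cos φ'
            + Real.sin α * Real.sinh ρ * Real.sin φ' * Real.cos θ' + Real.cos α)
        + (-(Real.sin α) * Real.cosh ρ * Real.cos φ'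
            + Real.cos α * Real.sinh ρ * Real.sin φ' * Real.cos θ' - Real.sin α))
        * (Real.cosh ρ + Real.cos φ)
      = Real.sinh ρ * (A * Real.sinh ρ * (δ * Real.cos α - Real.sin α)
        + B * Real.cosh ρ * (Real.cos α + δ * Real.sin α)
        - C * (Real.cos α + δ * Real.sin α)) := by
    simp only [A, B, C]
    linear_combination (δ * Real.cos α - Real.sin α) * (Real.cos φ - Real.cos φ')
      * Real.cosh_sq ρ
  constructor
  · intro h
    have h0 : Real.sinh ρ * (A * Real.sinh ρ * (δ * Real.cos α - Real.sin α)
        + B * Real.cosh ρ * (Real.cos α + δ * Real.sin α)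
        - C * (Real.cos α + δ * Real.sin α)) = 0 := by linear_combination h - key
    rcases mul_eq_zero.mp h0 with h' | h'
    · exact absurd h' hs.ne'
    · exact h'
  · intro h
    have := key
    rw [h, mul_zero, sub_eq_zero] at this
    exact this
end

section
/- For all δ, ρ, α, φ', θ' ∈ ℝ, the determinant of the 3×3 matrix with rows (sinh ρ·(δ cos α − sin α), cosh ρ·(cos α + δ sin α), −(cos α + δ sin α)), (sinh ρ·cos α, cosh ρ·sin α, sin α), (sin φ'·cos θ', −cos φ', −1) equals cosh ρ·sinh ρ + sinh ρ·cos φ'·(δ sin 2α + cos 2α) + cosh ρ·sin φ'·cos θ'·(sin 2α + 2δ sin²α). -/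
/-- Determinant of the coefficient matrix of the linear system in (A, B, C)
for non-perpendicular trajectories (δ = cot β), in prolate spheroidal coordinates. -/
theorem stmt_15 (δ ρ α φ' θ' : ℝ) :
    Matrix.det !![Real.sinh ρ * (δ * Real.cos α - Real.sin α),
                    Real.cosh ρ * (Real.cos α + δ * Real.sin α),
                    -(Real.cos α + δ * Real.sin α);
                  Real.sinh ρ * Real.cos α, Real.cosh ρ * Real.sin α, Real.sin α;
                  Real.sin φ' * Real.cos θ', -(Real.cos φ'), -1]
      = Real.cosh ρ * Real.sinh ρ
        + Real.sinh ρ * Real.cos φ' * (δ * Real.sin (2*α) + Real.cos (2*α))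
        + Real.cosh ρ * Real.sin φ' * Real.cos θ'
            * (Real.sin (2*α) + 2 * δ * Real.sin α ^ 2) := by
  simp only [Matrix.det_fin_three, Matrix.of_apply, Matrix.cons_val_zero, Matrix.cons_val_one, Matrix.head_cons,
    Matrix.cons_val_two, Matrix.tail_cons, Matrix.head_fin_const]
  rw [Real.sin_two_mul, Real.cos_two_mul]
  have h2 := Real.sin_sq_add_cos_sq α
  linear_combination (Real.cosh ρ * Real.sinh ρ - Real.sinh ρ * Real.cos φ') * h2
end

section
/- Let δ ∈ ℝ and let ρ > ln(5 + 8|δ|). Then for all α, φ', θ' ∈ ℝ, cosh ρ·sinh ρ + sinh ρ·cos φ'·(δ sin 2α + cos 2α) + cosh ρ·sin φ'·cos θ'·(sin 2α + 2δ sin²α) > 0. -/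
/-- For ρ > ln(5 + 8|δ|), the determinant quantity for non-perpendicular
trajectories is positive. -/
theorem stmt_17 (δ ρ : ℝ) (hρ : Real.log (5 + 8*|δ|) < ρ) (α φ' θ' : ℝ) :
    0 < Real.cosh ρ * Real.sinh ρ
        + Real.sinh ρ * Real.cos φ' * (δ * Real.sin (2*α) + Real.cos (2*α))
        + Real.cosh ρ * Real.sin φ' * Real.cos θ'
            * (Real.sin (2*α) + 2 * δ * Real.sin α ^ 2) := by
  have hd : (0:ℝ) ≤ |δ| := abs_nonneg δ
  have hpos : (0:ℝ) < 5 + 8*|δ| := by linarith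
  have hexp : 5 + 8*|δ| < Real.exp ρ := by
    calc 5 + 8*|δ| = Real.exp (Real.log (5 + 8*|δ|)) := (Real.exp_log hpos).symm
    _ < Real.exp ρ := Real.exp_lt_exp.mpr hρ
  have hρ0 : 0 < ρ := by
    by_contra h
    push_neg at h
    have := Real.exp_le_one_iff.mpr h
    linarith
  have hexpneg : Real.exp (-ρ) < 1 := Real.exp_lt_one_iff.mpr (by linarith)
  have hs : 2 + 3*|δ| < Real.sinh ρ := by
    rw [Real.sinh_eq]; linarith
  have hsc : Real.sinh ρ ≤ Real.cosh ρ := (Real.sinh_lt_cosh ρ).le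
  have hc1 : (1:ℝ) ≤ Real.cosh ρ := Real.one_le_cosh ρ
  have hs0 : 0 < Real.sinh ρ := by linarith
  -- bound on first trig factor
  have hA : |δ * Real.sin (2*α) + Real.cos (2*α)| ≤ 1 + |δ| := by
    calc |δ * Real.sin (2*α) + Real.cos (2*α)|
        ≤ |δ * Real.sin (2*α)| + |Real.cos (2*α)| := abs_add_le _ _
      _ ≤ |δ| * 1 + 1 := by
          rw [abs_mul]
          gcongr
          · exact Real.abs_sin_le_one _
          · exact Real.abs_cos_le_one _
      _ = 1 + |δ| := by ring
  have hB : |Real.sin (2*α) + 2 * δ * Real.sin α ^ 2| ≤ 1 + 2*|δ| := by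
    calc |Real.sin (2*α) + 2 * δ * Real.sin α ^ 2|
        ≤ |Real.sin (2*α)| + |2 * δ * Real.sin α ^ 2| := abs_add_le _ _
      _ ≤ 1 + 2*|δ| * 1 := by
          gcongr
          · exact Real.abs_sin_le_one _
          · rw [abs_mul, abs_mul, abs_two]
            gcongr
            rw [abs_pow]
            exact pow_le_one₀ (abs_nonneg _) (Real.abs_sin_le_one _)
      _ = 1 + 2*|δ| := by ring
  have h2 : |Real.sinh ρ * Real.cos φ' * (δ * Real.sin (2*α) + Real.cos (2*α))|
      ≤ Real.sinh ρ * (1 + |δ|) := by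
    rw [abs_mul, abs_mul, abs_of_pos hs0]
    calc Real.sinh ρ * |Real.cos φ'| * |δ * Real.sin (2*α) + Real.cos (2*α)|
        ≤ Real.sinh ρ * 1 * (1 + |δ|) := by
          gcongr
          · exact Real.abs_cos_le_one _
      _ = Real.sinh ρ * (1 + |δ|) := by ring
  have h3 : |Real.cosh ρ * Real.sin φ' * Real.cos θ'
      * (Real.sin (2*α) + 2 * δ * Real.sin α ^ 2)| ≤ Real.cosh ρ * (1 + 2*|δ|) := by
    rw [abs_mul, abs_mul, abs_mul, abs_of_pos (by linarith : (0:ℝ) < Real.cosh ρ)]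
    calc Real.cosh ρ * |Real.sin φ'| * |Real.cos θ'|
          * |Real.sin (2*α) + 2 * δ * Real.sin α ^ 2|
        ≤ Real.cosh ρ * 1 * 1 * (1 + 2*|δ|) := by
          gcongr
          · exact Real.abs_sin_le_one _
          · exact Real.abs_cos_le_one _
      _ = Real.cosh ρ * (1 + 2*|δ|) := by ring
  have h2' := neg_abs_le (Real.sinh ρ * Real.cos φ' * (δ * Real.sin (2*α) + Real.cos (2*α)))
  have h3' := neg_abs_le (Real.cosh ρ * Real.sin φ' * Real.cos θ'
      * (Real.sin (2*α) + 2 * δ * Real.sin α ^ 2))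
  nlinarith [mul_le_mul_of_nonneg_left hsc (by linarith : (0:ℝ) ≤ 1 + |δ|),
    mul_lt_mul_of_pos_left hs (by linarith : (0:ℝ) < Real.cosh ρ)]
end

section
/- Let δ ∈ ℝ, let ρ, ρ' > ln(5 + 8|δ|), φ, φ' ∈ (0, π), and α, θ, θ' ∈ ℝ. Suppose: (i) cosh ρ = cosh ρ'; (ii) (δ·(cos α·cosh ρ cos φ + sin α·sinh ρ sin φ cos θ + cos α) + (−sin α·cosh ρ cos φ + cos α·sinh ρ sin φ cos θ − sin α))/(cosh ρ + cos φ) = (δ·(cos α·cosh ρ' cos φ' + sin α·sinh ρ' sin φ' cos θ' + cos α) + (−sin α·cosh ρ' cos φ' + cos α·sinh ρ' sin φ' cos θ' − sin α))/(cosh ρ' + cos φ'); (iii) (cos α·cosh ρ cos φ + sin α·sinh ρ sin φ cos θ − cos α)/(cosh ρ − cos φ) = (cos α·cosh ρ' cos φ' + sin α·sinh ρ' sin φ' cos θ' − cos α)/(cosh ρ' − cos φ'). Then ρ = ρ', φ = φ', and cos θ = cos θ'. -/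
/-- Key inequality for the size of cosh/sinh. -/
lemma stmt_18_key (d c s : ℝ) (hd : 0 ≤ d) (hc : (5 + 8 * d) / 2 < c)
    (hcs : c - s < 1 / 2) (hs : 0 < s) : (1 + 2 * d) * c < s * (c - 1 - d) := by
  nlinarith [mul_nonneg hd hd, mul_pos hs hs]

/-- Bound on the rotation coefficient m. -/
lemma stmt_18_m_bound (δ sa ca : ℝ) (htrig : sa ^ 2 + ca ^ 2 = 1) :
    |2 * δ * sa * ca + ca ^ 2 - sa ^ 2| ≤ 1 + |δ| := by
  have hδ1 : δ ≤ |δ| := le_abs_self δ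
  have hδ2 : -|δ| ≤ δ := neg_abs_le δ
  have hd0 : (0:ℝ) ≤ |δ| := abs_nonneg δ
  rw [abs_le]
  constructor <;> nlinarith [sq_nonneg (sa - ca), sq_nonneg (sa + ca),
    mul_nonneg hd0 (sq_nonneg (sa - ca)), mul_nonneg hd0 (sq_nonneg (sa + ca)), sq_nonneg sa]

/-- Bound on the rotation coefficient 2k. -/
lemma stmt_18_k_bound (δ sa ca : ℝ) (htrig : sa ^ 2 + ca ^ 2 = 1) :
    |2 * (sa * (δ * sa + ca))| ≤ 1 + 2 * |δ| := by
  have hδ1 : δ ≤ |δ| := le_abs_self δ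
  have hδ2 : -|δ| ≤ δ := neg_abs_le δ
  have hd0 : (0:ℝ) ≤ |δ| := abs_nonneg δ
  rw [abs_le]
  constructor <;> nlinarith [sq_nonneg (sa - ca), sq_nonneg (sa + ca), sq_nonneg sa,
    mul_nonneg hd0 (sq_nonneg sa), mul_nonneg hd0 (sq_nonneg (sa - ca)),
    mul_nonneg hd0 (sq_nonneg (sa + ca))]

/-- Contradiction lemma. -/
lemma stmt_18_contra (c s x y p q : ℝ) (hx : |x| ≤ p) (hy : |y| ≤ q)
    (hs : 0 < s) (hc : 0 < c) (heq : c * s + x * s + y * c = 0)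
    (hkey : p * s + q * c < c * s) : False := by
  obtain ⟨hx1, hx2⟩ := abs_le.mp hx
  obtain ⟨hy1, hy2⟩ := abs_le.mp hy
  nlinarith

/-- Auxiliary algebraic lemma: the cross-multiplied composed canonical relation
equations force equality of the prolate spheroidal coordinates. -/
lemma stmt_18_alg (δ c s sa ca A B A' B' : ℝ)
    (htrig : sa ^ 2 + ca ^ 2 = 1)
    (hA : |A| ≤ 1) (hA' : |A'| ≤ 1) (hB : |B| ≤ 1) (hB' : |B'| ≤ 1)
    (hs : 0 < s) (hpy : s ^ 2 + 1 = c ^ 2)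
    (hc : (5 + 8 * |δ|) / 2 < c) (hcs : c - s < 1 / 2)
    (P3 : (ca * c * A + sa * s * B - ca) * (c - A')
        = (ca * c * A' + sa * s * B' - ca) * (c - A))
    (P2 : (δ * (ca * c * A + sa * s * B + ca) + (-sa * c * A + ca * s * B - sa)) * (c + A')
        = (δ * (ca * c * A' + sa * s * B' + ca) + (-sa * c * A' + ca * s * B' - sa)) * (c + A)) :
    A = A' ∧ B = B' := by
  have hd0 : (0:ℝ) ≤ |δ| := abs_nonneg δ
  have hA1 := abs_le.mp hA
  have hA'1 := abs_le.mp hA'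
  have hB1 := abs_le.mp hB
  have hB'1 := abs_le.mp hB'
  have hs' : s ≠ 0 := hs.ne'
  have hc0 : (0:ℝ) < c := by linarith
  set k : ℝ := sa * (δ * sa + ca) with hk_def
  set m : ℝ := 2 * δ * sa * ca + ca ^ 2 - sa ^ 2 with hm_def
  -- key derived equations
  have H1 : s ^ 2 * (A - A') = 2 * k * s * (B * A' - B' * A) := by
    linear_combination (δ * sa + ca) * P3 - sa * P2 + (A - A') * hpy
      + (A - A') * (1 - c ^ 2) * htrig
  have H2 : m * s ^ 2 * (A - A') + 2 * k * s * (c * (B - B')) = 0 := by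
    linear_combination (δ * sa + ca) * P3 + sa * P2 + m * (A - A') * hpy
  have hstar : s * (A - A') = 2 * k * (B * A' - B' * A) := by
    apply mul_left_cancel₀ hs'
    linear_combination H1
  have hdag : m * (s * (A - A')) + 2 * k * (c * (B - B')) = 0 := by
    apply mul_left_cancel₀ hs'
    linear_combination H2
  rcases eq_or_ne k 0 with hk | hk
  · -- degenerate case: k = 0
    have hu : A = A' := by
      have h0 : s * (A - A') = 0 := by rw [hstar, hk]; ring
      rcases mul_eq_zero.mp h0 with h | h
      · exact absurd h hs'
      · linarith [sub_eq_zero.mp h]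
    refine ⟨hu, ?_⟩
    subst hu
    rcases mul_eq_zero.mp hk with hsa | hca
    · -- sa = 0, so ca ≠ 0 and δ*sa + ca = ca ≠ 0
      have hca0 : ca ≠ 0 := by
        intro h; rw [hsa, h] at htrig; norm_num at htrig
      have hq : (δ * sa + ca) * (s * ((B - B') * (c + A))) = 0 := by
        linear_combination P2
      have hcA : 0 < c + A := by linarith
      have hcoef : δ * sa + ca ≠ 0 := by rw [hsa]; simpa using hca0
      have h2 := (mul_eq_zero.mp hq).resolve_left hcoef
      have h3 := (mul_eq_zero.mp h2).resolve_left hs'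
      have h4 := (mul_eq_zero.mp h3).resolve_right hcA.ne'
      linarith [sub_eq_zero.mp h4]
    · -- δ*sa + ca = 0, so sa ≠ 0
      have hsa0 : sa ≠ 0 := by
        intro h
        rw [h] at hca htrig
        have hca' : ca = 0 := by simpa using hca
        rw [hca'] at htrig; norm_num at htrig
      have hq : sa * (s * ((B - B') * (c - A))) = 0 := by
        linear_combination P3
      have hcA : 0 < c - A := by linarith
      have h2 := (mul_eq_zero.mp hq).resolve_left hsa0
      have h3 := (mul_eq_zero.mp h2).resolve_left hs'
      have h4 := (mul_eq_zero.mp h3).resolve_right hcA.ne'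
      linarith [sub_eq_zero.mp h4]
  · -- main case: k ≠ 0
    have Hrel : (A - A') * (c * s + A' * m * s + 2 * k * c * B') = 0 := by
      linear_combination c * hstar + A' * hdag
    have hu : A = A' := by
      by_contra hne
      have hne' : A - A' ≠ 0 := sub_ne_zero.mpr hne
      have heq : c * s + A' * m * s + 2 * k * c * B' = 0 :=
        (mul_eq_zero.mp Hrel).resolve_left hne'
      have hm : |A' * m| ≤ 1 + |δ| := by
        calc |A' * m| = |A'| * |m| := abs_mul _ _
        _ ≤ 1 * (1 + |δ|) := by
            apply mul_le_mul hA' (stmt_18_m_bound δ sa ca htrig) (abs_nonneg _) zero_le_one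
        _ = 1 + |δ| := one_mul _
      have hkb : |2 * k * B'| ≤ 1 + 2 * |δ| := by
        calc |2 * k * B'| = |2 * k| * |B'| := abs_mul _ _
        _ ≤ (1 + 2 * |δ|) * 1 := by
            apply mul_le_mul (stmt_18_k_bound δ sa ca htrig) hB' (abs_nonneg _) (by linarith)
        _ = 1 + 2 * |δ| := mul_one _
      have hkey := stmt_18_key |δ| c s hd0 hc hcs hs
      refine stmt_18_contra c s (A' * m) (2 * k * B') (1 + |δ|) (1 + 2 * |δ|)
        hm hkb hs hc0 (by linarith [heq]) (by nlinarith [hkey])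
    refine ⟨hu, ?_⟩
    subst hu
    have hz : m * (s * (A - A)) + 2 * k * (c * (B - B')) = 2 * k * (c * (B - B')) := by ring
    rw [hz] at hdag
    have hk' : (2:ℝ) * k ≠ 0 := by
      intro h; apply hk; linarith
    have h3 := (mul_eq_zero.mp hdag).resolve_left hk'
    have h4 := (mul_eq_zero.mp h3).resolve_left hc0.ne'
    linarith [sub_eq_zero.mp h4]

/-- For non-perpendicular trajectories (δ = cot β), the composed canonical
relation equations in prolate spheroidal coordinates with ρ, ρ' > ln(5 + 8|δ|) and
φ, φ' ∈ (0, π) force ρ = ρ', φ = φ' and cos θ = cos θ'. -/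
theorem stmt_18 (δ ρ ρ' φ φ' α θ θ' : ℝ)
    (hρ : Real.log (5 + 8*|δ|) < ρ) (hρ' : Real.log (5 + 8*|δ|) < ρ')
    (hφ : φ ∈ Set.Ioo 0 Real.pi) (hφ' : φ' ∈ Set.Ioo 0 Real.pi)
    (h1 : Real.cosh ρ = Real.cosh ρ')
    (h2 : (δ * (Real.cos α * Real.cosh ρ * Real.cos φ
            + Real.sin α * Real.sinh ρ * Real.sin φ * Real.cos θ + Real.cos α)
          + (-(Real.sin α) * Real.cosh ρ * Real.cos φ
            + Real.cos α * Real.sinh ρ * Real.sin φ * Real.cos θ - Real.sin α))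
          / (Real.cosh ρ + Real.cos φ)
        = (δ * (Real.cos α * Real.cosh ρ' * Real.cos φ'
            + Real.sin α * Real.sinh ρ' * Real.sin φ' * Real.cos θ' + Real.cos α)
          + (-(Real.sin α) * Real.cosh ρ' * Real.cos φ'
            + Real.cos α * Real.sinh ρ' * Real.sin φ' * Real.cos θ' - Real.sin α))
          / (Real.cosh ρ' + Real.cos φ'))
    (h3 : (Real.cos α * Real.cosh ρ * Real.cos φ
            + Real.sin α * Real.sinh ρ * Real.sin φ * Real.cos θ - Real.cos α)
          / (Real.cosh ρ - Real.cos φ)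
        = (Real.cos α * Real.cosh ρ' * Real.cos φ'
            + Real.sin α * Real.sinh ρ' * Real.sin φ' * Real.cos θ' - Real.cos α)
          / (Real.cosh ρ' - Real.cos φ')) :
    ρ = ρ' ∧ φ = φ' ∧ Real.cos θ = Real.cos θ' := by
  obtain ⟨hφ1, hφ2⟩ := hφ
  obtain ⟨hφ'1, hφ'2⟩ := hφ'
  have hd0 : (0:ℝ) ≤ |δ| := abs_nonneg δ
  have h5 : (1:ℝ) < 5 + 8 * |δ| := by linarith
  have h5' : (0:ℝ) < 5 + 8 * |δ| := by linarith
  have hlog : 0 < Real.log (5 + 8 * |δ|) := Real.log_pos h5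
  have hρ0 : 0 < ρ := lt_trans hlog hρ
  have hρ'0 : 0 < ρ' := lt_trans hlog hρ'
  -- ρ = ρ'
  have hsinh : Real.sinh ρ = Real.sinh ρ' := by
    have e1 := Real.cosh_sq ρ
    have e2 := Real.cosh_sq ρ'
    have p1 : 0 < Real.sinh ρ := Real.sinh_pos_iff.mpr hρ0
    have p2 : 0 < Real.sinh ρ' := Real.sinh_pos_iff.mpr hρ'0
    have hprod : (Real.sinh ρ - Real.sinh ρ') * (Real.sinh ρ + Real.sinh ρ') = 0 := by
      linear_combination (Real.cosh ρ + Real.cosh ρ') * h1 - e1 + e2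
    rcases mul_eq_zero.mp hprod with h | h
    · linarith [sub_eq_zero.mp h]
    · linarith
  have hρρ' : ρ = ρ' := Real.sinh_injective hsinh
  subst hρρ'
  refine ⟨rfl, ?_⟩
  -- bounds on c = cosh ρ and s = sinh ρ
  have hs0 : 0 < Real.sinh ρ := Real.sinh_pos_iff.mpr hρ0
  have hexpρ : 5 + 8 * |δ| < Real.exp ρ := by
    calc 5 + 8 * |δ| = Real.exp (Real.log (5 + 8 * |δ|)) := (Real.exp_log h5').symm
    _ < Real.exp ρ := Real.exp_lt_exp.mpr hρ
  have hc : (5 + 8 * |δ|) / 2 < Real.cosh ρ := by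
    have h := Real.cosh_eq ρ
    have := Real.exp_pos (-ρ)
    rw [h]; linarith
  have hcs : Real.cosh ρ - Real.sinh ρ < 1 / 2 := by
    rw [Real.cosh_sub_sinh, Real.exp_neg, inv_eq_one_div,
      div_lt_div_iff₀ (Real.exp_pos ρ) (by norm_num)]
    linarith
  have hpy : Real.sinh ρ ^ 2 + 1 = Real.cosh ρ ^ 2 := (Real.cosh_sq ρ).symm
  -- bounds on cos φ etc.
  have hAlt : ∀ x : ℝ, 0 < x → x < Real.pi → |Real.cos x| < 1 := by
    intro x hx1 hx2
    rw [abs_lt]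
    constructor
    · have := Real.strictAntiOn_cos ⟨le_of_lt hx1, le_of_lt hx2⟩
        ⟨le_of_lt Real.pi_pos, le_refl _⟩ hx2
      simpa [Real.cos_pi] using this
    · have := Real.strictAntiOn_cos ⟨le_refl (0:ℝ), le_of_lt Real.pi_pos⟩
        ⟨le_of_lt hx1, le_of_lt hx2⟩ hx1
      simpa [Real.cos_zero] using this
  have hA := hAlt φ hφ1 hφ2
  have hA' := hAlt φ' hφ'1 hφ'2
  have hA1 := abs_lt.mp hA
  have hA'1 := abs_lt.mp hA'
  have hB : |Real.sin φ * Real.cos θ| ≤ 1 := by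
    rw [abs_mul]
    exact mul_le_one₀ (Real.abs_sin_le_one φ) (abs_nonneg _) (Real.abs_cos_le_one θ)
  have hB' : |Real.sin φ' * Real.cos θ'| ≤ 1 := by
    rw [abs_mul]
    exact mul_le_one₀ (Real.abs_sin_le_one φ') (abs_nonneg _) (Real.abs_cos_le_one θ')
  -- denominators nonzero
  have hd1 : Real.cosh ρ - Real.cos φ ≠ 0 := by
    have := hA1.2; intro h; linarith
  have hd2 : Real.cosh ρ - Real.cos φ' ≠ 0 := by
    have := hA'1.2; intro h; linarith
  have hd3 : Real.cosh ρ + Real.cos φ ≠ 0 := by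
    have := hA1.1; intro h; linarith
  have hd4 : Real.cosh ρ + Real.cos φ' ≠ 0 := by
    have := hA'1.1; intro h; linarith
  rw [div_eq_div_iff hd1 hd2] at h3
  rw [div_eq_div_iff hd3 hd4] at h2
  have htrig : Real.sin α ^ 2 + Real.cos α ^ 2 = 1 := Real.sin_sq_add_cos_sq α
  have key := stmt_18_alg δ (Real.cosh ρ) (Real.sinh ρ) (Real.sin α) (Real.cos α)
    (Real.cos φ) (Real.sin φ * Real.cos θ) (Real.cos φ') (Real.sin φ' * Real.cos θ')
    htrig (le_of_lt hA) (le_of_lt hA') hB hB' hs0 hpy hc hcs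
    (by linear_combination h3) (by linear_combination h2)
  obtain ⟨hAA, hBB⟩ := key
  have hφφ' : φ = φ' := Real.injOn_cos ⟨le_of_lt hφ1, le_of_lt hφ2⟩
    ⟨le_of_lt hφ'1, le_of_lt hφ'2⟩ hAA
  refine ⟨hφφ', ?_⟩
  subst hφφ'
  have hsφ : Real.sin φ ≠ 0 := (Real.sin_pos_of_pos_of_lt_pi hφ1 hφ2).ne'
  exact mul_left_cancel₀ hsφ hBB
end

section
/- Let δ ∈ ℝ, let s, r ∈ ℝ with (s, r) ≠ (0, 0), set D = √(s² + (δs − r)²), K = 5 + 8|δ|, γ₁ = (2sδ, 2s, 0), γ₂ = (2r, 0, 0). Let x = (x₁, x₂, x₃) and y = (y₁, y₂, y₃) in ℝ³ satisfy x₃ ≠ 0, y₃ ≠ 0, |x − γ₁| + |x − γ₂| > D·(K + 1/K), and |y − γ₁| + |y − γ₂| > D·(K + 1/K). Suppose the three composition equations hold: (i) |x − γ₁| + |x − γ₂| = |y − γ₁| + |y − γ₂|; (ii) (δ·(x₁ − 2sδ) + (x₂ − 2s))/|x − γ₁| = (δ·(y₁ − 2sδ) + (y₂ − 2s))/|y −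 γ₁|; (iii) (x₁ − 2r)/|x − γ₂| = (y₁ − 2r)/|y − γ₂|. Then x₁ = y₁, x₂ = y₂, and x₃ = y₃ or x₃ = −y₃. -/
set_option maxHeartbeats 1000000


/-- Time-gated absence of artefacts for non-perpendicular trajectories
γ₁ = (2sδ, 2s, 0), γ₂ = (2r, 0, 0): with D = √(s² + (δs − r)²) and K = 5 + 8|δ|, if x
and y (with nonzero third coordinate) satisfy the three composition equations and both
bistatic ranges exceed D(K + 1/K), then y = x or y is the mirror image of x across
the plane of the trajectories. -/
theorem stmt_19 (δ s r x₁ x₂ x₃ y₁ y₂ y₃ : ℝ) (hsr : (s, r) ≠ ((0:ℝ), (0:ℝ)))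
    (hx₃ : x₃ ≠ 0) (hy₃ : y₃ ≠ 0)
    (hxgate : Real.sqrt ((x₁ - 2*s*δ)^2 + (x₂ - 2*s)^2 + x₃^2)
        + Real.sqrt ((x₁ - 2*r)^2 + x₂^2 + x₃^2)
        > Real.sqrt (s^2 + (δ*s - r)^2) * ((5 + 8*|δ|) + 1/(5 + 8*|δ|)))
    (hygate : Real.sqrt ((y₁ - 2*s*δ)^2 + (y₂ - 2*s)^2 + y₃^2)
        + Real.sqrt ((y₁ - 2*r)^2 + y₂^2 + y₃^2)
        > Real.sqrt (s^2 + (δ*s - r)^2) * ((5 + 8*|δ|) + 1/(5 + 8*|δ|)))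
    (h1 : Real.sqrt ((x₁ - 2*s*δ)^2 + (x₂ - 2*s)^2 + x₃^2)
        + Real.sqrt ((x₁ - 2*r)^2 + x₂^2 + x₃^2)
        = Real.sqrt ((y₁ - 2*s*δ)^2 + (y₂ - 2*s)^2 + y₃^2)
        + Real.sqrt ((y₁ - 2*r)^2 + y₂^2 + y₃^2))
    (h2 : (δ*(x₁ - 2*s*δ) + (x₂ - 2*s))
        / Real.sqrt ((x₁ - 2*s*δ)^2 + (x₂ - 2*s)^2 + x₃^2)
        = (δ*(y₁ - 2*s*δ) + (y₂ - 2*s))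
        / Real.sqrt ((y₁ - 2*s*δ)^2 + (y₂ - 2*s)^2 + y₃^2))
    (h3 : (x₁ - 2*r) / Real.sqrt ((x₁ - 2*r)^2 + x₂^2 + x₃^2)
        = (y₁ - 2*r) / Real.sqrt ((y₁ - 2*r)^2 + y₂^2 + y₃^2)) :
    x₁ = y₁ ∧ x₂ = y₂ ∧ (x₃ = y₃ ∨ x₃ = -y₃) := by
  have hxA : (0:ℝ) < (x₁ - 2*s*δ)^2 + (x₂ - 2*s)^2 + x₃^2 := by positivity
  have hxB : (0:ℝ) < (x₁ - 2*r)^2 + x₂^2 + x₃^2 := by positivity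
  have hyA : (0:ℝ) < (y₁ - 2*s*δ)^2 + (y₂ - 2*s)^2 + y₃^2 := by positivity
  have hyB : (0:ℝ) < (y₁ - 2*r)^2 + y₂^2 + y₃^2 := by positivity
  have hDarg : 0 < s^2 + (δ*s - r)^2 := by
    rcases lt_or_eq_of_le (by positivity : (0:ℝ) ≤ s^2 + (δ*s - r)^2) with h | h
    · exact h
    · exfalso
      have hsq1 := sq_nonneg s
      have hsq2 := sq_nonneg (δ*s - r)
      have hs2 : s^2 = 0 := by linarith
      have hs : s = 0 := sq_eq_zero_iff.mp hs2
      subst hs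
      have hr : r = 0 := by
        have hr2 : r^2 = 0 := by linear_combination -h
        exact sq_eq_zero_iff.mp hr2
      exact hsr (by simp [hr])
  -- sqrt facts, proven before abstraction
  have hAxpos : 0 < Real.sqrt ((x₁ - 2*s*δ)^2 + (x₂ - 2*s)^2 + x₃^2) := Real.sqrt_pos.mpr hxA
  have hBxpos : 0 < Real.sqrt ((x₁ - 2*r)^2 + x₂^2 + x₃^2) := Real.sqrt_pos.mpr hxB
  have hAypos : 0 < Real.sqrt ((y₁ - 2*s*δ)^2 + (y₂ - 2*s)^2 + y₃^2) := Real.sqrt_pos.mpr hyA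
  have hBypos : 0 < Real.sqrt ((y₁ - 2*r)^2 + y₂^2 + y₃^2) := Real.sqrt_pos.mpr hyB
  have hAx2 : (Real.sqrt ((x₁ - 2*s*δ)^2 + (x₂ - 2*s)^2 + x₃^2))^2
      = (x₁ - 2*s*δ)^2 + (x₂ - 2*s)^2 + x₃^2 := Real.sq_sqrt hxA.le
  have hBx2 : (Real.sqrt ((x₁ - 2*r)^2 + x₂^2 + x₃^2))^2
      = (x₁ - 2*r)^2 + x₂^2 + x₃^2 := Real.sq_sqrt hxB.le
  have hAy2 : (Real.sqrt ((y₁ - 2*s*δ)^2 + (y₂ - 2*s)^2 + y₃^2))^2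
      = (y₁ - 2*s*δ)^2 + (y₂ - 2*s)^2 + y₃^2 := Real.sq_sqrt hyA.le
  have hBy2 : (Real.sqrt ((y₁ - 2*r)^2 + y₂^2 + y₃^2))^2
      = (y₁ - 2*r)^2 + y₂^2 + y₃^2 := Real.sq_sqrt hyB.le
  have hDpos : 0 < Real.sqrt (s^2 + (δ*s - r)^2) := Real.sqrt_pos.mpr hDarg
  have hsD : |s| ≤ Real.sqrt (s^2 + (δ*s - r)^2) := by
    rw [← Real.sqrt_sq_eq_abs]
    exact Real.sqrt_le_sqrt (le_add_of_nonneg_right (sq_nonneg _))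
  have hdsr : |δ*s - r| ≤ Real.sqrt (s^2 + (δ*s - r)^2) := by
    rw [← Real.sqrt_sq_eq_abs]
    exact Real.sqrt_le_sqrt (le_add_of_nonneg_left (sq_nonneg _))
  have hu1 : |x₁ - 2*s*δ| ≤ Real.sqrt ((x₁ - 2*s*δ)^2 + (x₂ - 2*s)^2 + x₃^2) := by
    rw [← Real.sqrt_sq_eq_abs]
    exact Real.sqrt_le_sqrt ((le_add_of_nonneg_right (sq_nonneg _)).trans (le_add_of_nonneg_right (sq_nonneg _)))
  have hu2 : |x₂ - 2*s| ≤ Real.sqrt ((x₁ - 2*s*δ)^2 + (x₂ - 2*s)^2 + x₃^2) := by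
    rw [← Real.sqrt_sq_eq_abs]
    exact Real.sqrt_le_sqrt ((le_add_of_nonneg_left (sq_nonneg _)).trans (le_add_of_nonneg_right (sq_nonneg _)))
  have hv1 : |x₁ - 2*r| ≤ Real.sqrt ((x₁ - 2*r)^2 + x₂^2 + x₃^2) := by
    rw [← Real.sqrt_sq_eq_abs]
    exact Real.sqrt_le_sqrt ((le_add_of_nonneg_right (sq_nonneg _)).trans (le_add_of_nonneg_right (sq_nonneg _)))
  -- abstract the square roots
  set Ax := Real.sqrt ((x₁ - 2*s*δ)^2 + (x₂ - 2*s)^2 + x₃^2) with hAxdef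
  set Bx := Real.sqrt ((x₁ - 2*r)^2 + x₂^2 + x₃^2) with hBxdef
  set Ay := Real.sqrt ((y₁ - 2*s*δ)^2 + (y₂ - 2*s)^2 + y₃^2) with hAydef
  set By := Real.sqrt ((y₁ - 2*r)^2 + y₂^2 + y₃^2) with hBydef
  set Dd := Real.sqrt (s^2 + (δ*s - r)^2) with hDdef
  clear_value Ax Bx Ay By Dd
  clear hAxdef hBxdef hAydef hBydef hDdef hxA hxB hyA hyB
  have hrD : |r| ≤ Dd * (1 + |δ|) := by
    have ha : |r| ≤ |δ*s| + |δ*s - r| := by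
      calc |r| = |δ*s - (δ*s - r)| := by congr 1; ring
        _ ≤ |δ*s| + |δ*s - r| := abs_sub _ _
    have hb : |δ*s| = |δ| * |s| := abs_mul δ s
    linarith [mul_le_mul_of_nonneg_left hsD (abs_nonneg δ)]
  set p := (δ*(x₁ - 2*s*δ) + (x₂ - 2*s)) / Ax with hpdef
  set q := (x₁ - 2*r) / Bx with hqdef
  clear_value p q
  have hPx : δ*(x₁ - 2*s*δ) + (x₂ - 2*s) = p * Ax := by
    rw [hpdef]; exact (div_mul_cancel₀ _ hAxpos.ne').symm
  have hPy : δ*(y₁ - 2*s*δ) + (y₂ - 2*s) = p * Ay := by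
    rw [h2]; exact (div_mul_cancel₀ _ hAypos.ne').symm
  have hQx : x₁ - 2*r = q * Bx := by
    rw [hqdef]; exact (div_mul_cancel₀ _ hBxpos.ne').symm
  have hQy : y₁ - 2*r = q * By := by
    rw [h3]; exact (div_mul_cancel₀ _ hBypos.ne').symm
  have hp : |p| ≤ 1 + |δ| := by
    rw [hpdef, abs_div, abs_of_pos hAxpos, div_le_iff₀ hAxpos]
    calc |δ*(x₁ - 2*s*δ) + (x₂ - 2*s)| ≤ |δ*(x₁ - 2*s*δ)| + |x₂ - 2*s| := abs_add_le _ _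
      _ = |δ| * |x₁ - 2*s*δ| + |x₂ - 2*s| := by rw [abs_mul]
      _ ≤ (1 + |δ|) * Ax := by
          linarith [mul_le_mul_of_nonneg_left hu1 (abs_nonneg δ)]
  have hq : |q| ≤ 1 := by
    rw [hqdef, abs_div, abs_of_pos hBxpos, div_le_iff₀ hBxpos]
    simpa using hv1
  have hCx : Ax^2 - Bx^2 = 4*r*(x₁ - 2*r) - 4*s*(δ*(x₁ - 2*s*δ) + (x₂ - 2*s))
      + (4*r^2 - 4*s^2 - 4*s^2*δ^2) := by
    rw [hAx2, hBx2]; ring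
  have hCy : Ay^2 - By^2 = 4*r*(y₁ - 2*r) - 4*s*(δ*(y₁ - 2*s*δ) + (y₂ - 2*s))
      + (4*r^2 - 4*s^2 - 4*s^2*δ^2) := by
    rw [hAy2, hBy2]; ring
  have eqx : Ax * (2*(Ax + Bx) + 4*r*q + 4*s*p)
      = (Ax + Bx)^2 + 4*r*q*(Ax + Bx) + (4*r^2 - 4*s^2 - 4*s^2*δ^2) := by
    linear_combination hCx - 4*s*hPx + 4*r*hQx
  have eqy : Ay * (2*(Ay + By) + 4*r*q + 4*s*p)
      = (Ay + By)^2 + 4*r*q*(Ay + By) + (4*r^2 - 4*s^2 - 4*s^2*δ^2) := by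
    linear_combination hCy - 4*s*hPy + 4*r*hQy
  rw [← h1] at eqy
  have hM : 0 < 2*(Ax + Bx) + 4*r*q + 4*s*p := by
    have hsp : |s*p| ≤ Dd * (1 + |δ|) := by
      rw [abs_mul]; exact mul_le_mul hsD hp (abs_nonneg p) hDpos.le
    have hrq : |r*q| ≤ Dd * (1 + |δ|) := by
      rw [abs_mul]
      calc |r| * |q| ≤ (Dd * (1 + |δ|)) * 1 := mul_le_mul hrD hq (abs_nonneg q) (by positivity)
        _ = Dd * (1 + |δ|) := by ring
    have hKd : 0 < Dd * (1/(5 + 8*|δ|)) := by positivity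
    have h4 : 4*(Dd*(1 + |δ|)) ≤ Dd*(5 + 8*|δ|) := by
      linarith [mul_nonneg hDpos.le (abs_nonneg δ)]
    linarith [neg_abs_le (s*p), neg_abs_le (r*q), hsp, hrq, hxgate, hKd, h4]
  have hAA : Ax = Ay := mul_right_cancel₀ (ne_of_gt hM) (eqx.trans eqy.symm)
  have hBB : Bx = By := by linarith
  have hx1 : x₁ = y₁ := by
    have h := hQy
    rw [← hBB] at h
    linarith [hQx, h]
  have hPP : δ*(x₁ - 2*s*δ) + (x₂ - 2*s) = δ*(y₁ - 2*s*δ) + (y₂ - 2*s) := by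
    rw [hPx, hPy, hAA]
  have hx2 : x₂ = y₂ := by linear_combination hPP - δ*hx1
  have hB2 : (x₁ - 2*r)^2 + x₂^2 + x₃^2 = (y₁ - 2*r)^2 + y₂^2 + y₃^2 := by
    rw [← hBx2, ← hBy2, hBB]
  have hx3 : (x₃ - y₃) * (x₃ + y₃) = 0 := by
    linear_combination hB2 - (x₁ + y₁ - 4*r)*hx1 - (x₂ + y₂)*hx2
  refine ⟨hx1, hx2, ?_⟩
  rcases mul_eq_zero.mp hx3 with h | h
  · left; linarith
  · right; linarith
end
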